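/- arXiv:2312.07999 — 2 statements merged into one kernel-verified Lean document; each statement's English description precedes it below -/
import Mathlib

section
/- A competitive equilibrium with endowments is Pareto efficient: if prices p and injective allocation a satisfy that each agent's item maximizes v_j(i) − p(i) over all items, and alternative allocation a' (injective, with the same range as a) together with budget-balanced transfers t' weakly improves every agent's quasilinear utility relative to (a, t) where t(j) = p(e(j)) − p(a(j)), then no agent is strictly better off under (a', t'). -/
lemma sum_comp_eq_of_range_eq {M Item : Type} [Fintype M] (p : Item → ℝ)
    (f g : M → Item) (hf : Function.Injective f) (hg : Function.Injective g)
    (h : Set.range f = Set.range g) : ∑ j, p (f j) = ∑ j, p (g j) := by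
  classical
  rw [← Finset.sum_image (fun x _ y _ hxy => hf hxy),
      ← Finset.sum_image (fun x _ y _ hxy => hg hxy)]
  congr 1
  apply Finset.coe_injective
  simpa [Set.image_univ] using h

/-- A competitive equilibrium with endowments is Pareto efficient: if each
agent's assigned item maximizes `v_j(i) − p(i)`, and an alternative injective
allocation `a'` (with the same range) together with budget-balanced transfers
`t'` weakly improves every agent's quasilinear utility relative to the
equilibrium outcome with transfers `t(j) = p(e(j)) − p(a(j))`, then no agent is
strictly better off: all utilities are equal. -/
theorem competitive_equilibrium_pareto_efficient {M Item : Type} [Fintype M]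
    (v : M → Item → ℝ) (p : Item → ℝ) (e a a' : M → Item)
    (he : Function.Injective e) (ha : Function.Injective a)
    (ha' : Function.Injective a')
    (hrange : Set.range a = Set.range e)
    (hrange' : Set.range a' = Set.range e)
    (heq : ∀ (j : M) (i : Item), v j i - p i ≤ v j (a j) - p (a j))
    (t' : M → ℝ) (ht' : ∑ j, t' j = 0)
    (hdom : ∀ j : M,
      v j (a j) + (p (e j) - p (a j)) ≤ v j (a' j) + t' j) :
    ∀ j : M, v j (a' j) + t' j = v j (a j) + (p (e j) - p (a j)) := by
  have hpa : ∑ j, p (a j) = ∑ j, p (e j) :=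
    sum_comp_eq_of_range_eq p a e ha he hrange
  have hpa' : ∑ j, p (a' j) = ∑ j, p (e j) :=
    sum_comp_eq_of_range_eq p a' e ha' he hrange'
  have hsum : ∑ j, (v j (a' j) + t' j) ≤ ∑ j, (v j (a j) + (p (e j) - p (a j))) := by
    have h1 : ∑ j, (v j (a' j) - p (a' j)) ≤ ∑ j, (v j (a j) - p (a j)) :=
      Finset.sum_le_sum fun j _ => heq j (a' j)
    have e1 : ∑ j, (v j (a' j) + t' j)
        = ∑ j, (v j (a' j) - p (a' j)) + ∑ j, p (a' j) + ∑ j, t' j := by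
      rw [Finset.sum_add_distrib, Finset.sum_sub_distrib]; ring
    have e2 : ∑ j, (v j (a j) + (p (e j) - p (a j)))
        = ∑ j, (v j (a j) - p (a j)) + ∑ j, p (e j) := by
      rw [Finset.sum_add_distrib, Finset.sum_sub_distrib,
        Finset.sum_sub_distrib]; ring
    rw [e1, e2, ht', hpa']
    linarith
  intro j
  by_contra hne
  have hlt : v j (a j) + (p (e j) - p (a j)) < v j (a' j) + t' j :=
    lt_of_le_of_ne (hdom j) (fun h => hne h.symm)
  have := Finset.sum_lt_sum (fun i _ => hdom i) ⟨j, Finset.mem_univ j, hlt⟩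
  linarith
end

section
/- If the welfare-maximizing allocation is reachable at every step, interim transfers achieve it: suppose agents choose in order 1,…,m, and at each agent j's turn it is feasible (given remaining items and allowed single trades with earlier agents) to move to the restriction of the welfare-optimal allocation to agents 1,…,j. Then in the equilibrium where each agent maximizes their own quasilinear payoff (choosing an item and possibly one trade with an earlier agent at a transfer making the earlier agent weakly better off), the restricted allocation after each agent j's turn maximizes ∑_{j'=1}^{j} v_{j'}(a(j')) over injective assignments of the first j agents to items with the same reachability constraints; in particular, the final allocation maximizes total welfare ∑_{j=1}^m v_j(a(j)). -/
/-- In serial dictatorship with interim transfers, an *option* for agent `j`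
facing the current allocation `A` (of agents `0, …, j−1` to items): agent `j`
chooses an item `i` not taken by an earlier agent, and either keeps it
(resulting allocation `A[j ↦ i]`, payoff `v_j(i)`), or offers it together with
a transfer `t` to some earlier agent `j'` who accepts iff weakly better off
(`v_{j'}(i) + t ≥ v_{j'}(A(j'))`); in that case the result swaps them
(`j'` gets `i`, `j` gets `A(j')`) and `j`'s payoff is `v_j(A(j')) − t`. -/
def IsOption {Item : Type} [DecidableEq Item] (v : ℕ → Item → ℝ)
    (A : ℕ → Item) (j : ℕ) (B : ℕ → Item) (payoff : ℝ) : Prop :=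
  ∃ i : Item, (∀ j' < j, A j' ≠ i) ∧
    ((B = Function.update A j i ∧ payoff = v j i) ∨
      (∃ j' < j, ∃ t : ℝ,
        v j' (A j') ≤ v j' i + t ∧
        B = Function.update (Function.update A j (A j')) j' i ∧
        payoff = v j (A j') - t))

/-- A partial allocation `B` of agents `0, …, j` is welfare-optimal if it
maximizes `∑_{j' ≤ j} v_{j'}(B(j'))` over all injective partial assignments. -/
def OptimalPartial {Item : Type} (v : ℕ → Item → ℝ) (j : ℕ)
    (B : ℕ → Item) : Prop :=
  ∀ C : ℕ → Item, Set.InjOn C (Set.Iio (j + 1)) →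
    ∑ j' ∈ Finset.range (j + 1), v j' (C j') ≤
      ∑ j' ∈ Finset.range (j + 1), v j' (B j')


lemma keep_sum' {Item : Type} [DecidableEq Item] (v : ℕ → Item → ℝ)
    (A : ℕ → Item) (j : ℕ) (i : Item) :
    ∑ k ∈ Finset.range (j+1), v k (Function.update A j i k)
      = (∑ k ∈ Finset.range j, v k (A k)) + v j i := by
  rw [Finset.sum_range_succ, Function.update_self]
  congr 1
  exact Finset.sum_congr rfl fun k hk => by
    rw [Function.update_of_ne (Finset.mem_range.mp hk).ne]

lemma trade_sum' {Item : Type} [DecidableEq Item] (v : ℕ → Item → ℝ)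
    (A : ℕ → Item) (j j' : ℕ) (hj' : j' < j) (i : Item) :
    ∑ k ∈ Finset.range (j+1),
        v k (Function.update (Function.update A j (A j')) j' i k)
      = (∑ k ∈ Finset.range j, v k (A k))
        + v j (A j') + (v j' i - v j' (A j')) := by
  rw [Finset.sum_range_succ, Function.update_of_ne hj'.ne', Function.update_self]
  have h : ∑ k ∈ Finset.range j,
      (v k (Function.update (Function.update A j (A j')) j' i k) - v k (A k))
      = v j' i - v j' (A j') := by
    rw [Finset.sum_eq_single j']
    · rw [Function.update_self]
    · intro k hk hkj'
      rw [Function.update_of_ne hkj', Function.update_of_ne (Finset.mem_range.mp hk).ne, sub_self]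
    · intro h; exact absurd (Finset.mem_range.mpr hj') h
  have := Finset.sum_sub_distrib (s := Finset.range j)
    (f := fun k => v k (Function.update (Function.update A j (A j')) j' i k))
    (g := fun k => v k (A k))
  linarith [this ▸ h]

/-- The welfare of the partial allocation resulting from any option of agent `j`
is at least the agent's payoff plus the welfare of the earlier agents. -/
lemma option_payoff_le' {Item : Type} [DecidableEq Item] (v : ℕ → Item → ℝ)
    (A : ℕ → Item) (j : ℕ) (B : ℕ → Item) (p : ℝ)
    (h : IsOption v A j B p) :
    p + ∑ k ∈ Finset.range j, v k (A k) ≤ ∑ k ∈ Finset.range (j+1), v k (B k) := by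
  obtain ⟨i, -, hcase⟩ := h
  rcases hcase with ⟨hB, hp⟩ | ⟨j', hj', t, ht, hB, hp⟩
  · subst hB; rw [keep_sum']; linarith
  · subst hB; rw [trade_sum' v A j j' hj' i]; linarith

/-- Any reachable allocation `B` is reachable with the minimal transfer,
extracting the full welfare gain as payoff. -/
lemma option_improve' {Item : Type} [DecidableEq Item] (v : ℕ → Item → ℝ)
    (A : ℕ → Item) (j : ℕ) (B : ℕ → Item) (p : ℝ)
    (h : IsOption v A j B p) :
    IsOption v A j B
      ((∑ k ∈ Finset.range (j+1), v k (B k)) - ∑ k ∈ Finset.range j, v k (A k)) := by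
  obtain ⟨i, hfree, hcase⟩ := h
  refine ⟨i, hfree, ?_⟩
  rcases hcase with ⟨hB, hp⟩ | ⟨j', hj', t, ht, hB, hp⟩
  · left
    refine ⟨hB, ?_⟩
    subst hB; rw [keep_sum']; ring
  · right
    refine ⟨j', hj', v j' (A j') - v j' i, by linarith, hB, ?_⟩
    subst hB; rw [trade_sum' v A j j' hj' i]; ring

/-- If, at every agent's turn, some available option induces the
welfare-optimal partial allocation (feasibility), then in the equilibrium in
which each agent chooses an option maximizing their own quasilinear payoff,
the allocation after each agent `j`'s turn maximizes `∑_{j' ≤ j} v_{j'}(a(j'))`;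
in particular (taking `j = m − 1`), the final allocation maximizes total
welfare. -/
theorem interim_transfers_reach_optimum {Item : Type} [Fintype Item]
    [DecidableEq Item] (m : ℕ) (v : ℕ → Item → ℝ)
    (alloc : ℕ → ℕ → Item)
    (hinj : ∀ j ≤ m, Set.InjOn (alloc j) (Set.Iio j))
    (hequil : ∀ j < m, ∃ payoff : ℝ,
      IsOption v (alloc j) j (alloc (j + 1)) payoff ∧
      ∀ (B : ℕ → Item) (p' : ℝ), IsOption v (alloc j) j B p' → p' ≤ payoff)
    (hfeas : ∀ j < m, ∃ (B : ℕ → Item) (p : ℝ),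
      IsOption v (alloc j) j B p ∧ OptimalPartial v j B) :
    ∀ j < m, OptimalPartial v j (alloc (j + 1)) := by
  intro j hj C hC
  obtain ⟨payoff, heq, hmax⟩ := hequil j hj
  obtain ⟨B, p, hBopt, hOpt⟩ := hfeas j hj
  have h1 := hmax B _ (option_improve' v (alloc j) j B p hBopt)
  have h2 := option_payoff_le' v (alloc j) j (alloc (j+1)) payoff heq
  have h3 := hOpt C hC
  linarith
end
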